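/- arXiv:2308.07696 — 3 statements merged into one kernel-verified Lean document; each statement's English description precedes it below -/
import Mathlib

section
/- Fix c > 0. There exist a constant C₀ > 0 and N₀ such that for every odd integer N ≥ N₀ and every vertex v ∈ V_N, the sum Σ_{u ∈ V_N} p(v,u) satisfies |Σ_{u ∈ V_N} p(v,u) − (4c·log 2 − 2c/N − c/N²)| ≤ C₀/N⁴. -/
open scoped BigOperators

/-- Vertices of the discrete 2-dimensional torus. -/
abbrev Vtx (N : ℕ) : Type := ZMod N × ZMod N

/-- `ρ_N(i)`: for a residue represented in `{0,…,N−1}`, `ρ_N(i) = i` if `i ≤ N/2`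
and `ρ_N(i) = N − i` otherwise. -/
def rhoN (N : ℕ) (i : ZMod N) : ℕ :=
  if 2 * i.val ≤ N then i.val else N - i.val

/-- Torus distance `ρ(u,v) = ρ_N(u₁ − v₁) + ρ_N(u₂ − v₂)`. -/
def torusDist (N : ℕ) (u v : Vtx N) : ℕ :=
  rhoN N (u.1 - v.1) + rhoN N (u.2 - v.2)

/-- Connection probability `p(u,v) = min(c/(N·ρ(u,v)), 1)` for `u ≠ v`, `p(u,u) = 0`. -/
noncomputable def edgeProb (N : ℕ) (c : ℝ) (u v : Vtx N) : ℝ :=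
  if u = v then 0 else min (c / ((N : ℝ) * (torusDist N u v : ℝ))) 1

/-!
For `N = 2M + 1` and `c ≤ N` the cap in `p` is never active, and sorting the vertices by their
torus distance from `v` gives
`Σ_u p(v,u) = (4c/N) (H_M + Σ_{1 ≤ i,j ≤ M} 1/(i+j)) = 4c (H_{2M} - H_M)`.
The sequence `D_M = H_{2M} - H_M + 1/(2N) + 1/(4N²)` tends to `log 2` by the Euler–Mascheroni limit,
and its increments are `-1/(N²(N+1)(N+2)²) = O(M⁻⁵)`; telescoping gives `|D_M - log 2| ≤ 1/(4M⁴)`.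
-/

open Finset Filter Topology Real

theorem dist_le_of_tendsto_of_dist_succ_le {E : Type*} [PseudoMetricSpace E] {a : ℕ → E}
    {b : ℕ → ℝ} {L : E} {M : ℕ} (ha : Tendsto a atTop (𝓝 L)) (hb : Tendsto b atTop (𝓝 0))
    (hstep : ∀ m ≥ M, dist (a (m + 1)) (a m) ≤ b m - b (m + 1)) :
    dist (a M) L ≤ b M := by
  have htele : ∀ K, dist (a (M + K)) (a M) ≤ b M - b (M + K) := by
    intro K
    induction K with
    | zero => simp
    | succ K ih =>
      calc dist (a (M + K + 1)) (a M)
          ≤ dist (a (M + K + 1)) (a (M + K)) + dist (a (M + K)) (a M) := dist_triangle _ _ _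
        _ ≤ (b (M + K) - b (M + K + 1)) + (b M - b (M + K)) :=
          add_le_add (hstep _ (Nat.le_add_right M K)) ih
        _ = b M - b (M + K + 1) := by ring
  have hshift : Tendsto (M + ·) atTop atTop := by
    simpa only [add_comm M] using tendsto_add_atTop_nat M
  rw [dist_comm]
  simpa using le_of_tendsto_of_tendsto' ((ha.comp hshift).dist tendsto_const_nhds)
    (tendsto_const_nhds.sub (hb.comp hshift)) htele

lemma rhoN_eq_zero_iff {N : ℕ} [NeZero N] {x : ZMod N} : rhoN N x = 0 ↔ x = 0 := by
  have hlt := ZMod.val_lt x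
  unfold rhoN
  split_ifs with h
  · exact ZMod.val_eq_zero x
  · constructor
    · omega
    · rintro rfl; simp at h

lemma torusDist_eq_zero_iff {N : ℕ} [NeZero N] {u v : Vtx N} : torusDist N u v = 0 ↔ u = v := by
  simp [torusDist, rhoN_eq_zero_iff, Prod.ext_iff, sub_eq_zero]

/-- Also on the diagonal, where both sides vanish because `c / (N * 0) = 0` in Lean. -/
lemma edgeProb_eq_div {N : ℕ} [NeZero N] {c : ℝ} (hcN : c ≤ N) (u v : Vtx N) :
    edgeProb N c u v = c / (N * torusDist N u v) := by
  unfold edgeProb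
  split_ifs with huv
  · simp [huv, torusDist_eq_zero_iff.2 rfl]
  · have hd : (1 : ℝ) ≤ torusDist N u v := by
      exact_mod_cast Nat.one_le_iff_ne_zero.2 (mt torusDist_eq_zero_iff.1 huv)
    refine min_eq_left (div_le_one_of_le₀ ?_ (by positivity))
    nlinarith [(Nat.cast_nonneg N : (0 : ℝ) ≤ N)]

lemma sum_torusDist_eq {R : Type*} [AddCommMonoid R] {N : ℕ} [NeZero N] (v : Vtx N) (g : ℕ → R) :
    ∑ u : Vtx N, g (torusDist N v u) = ∑ w : Vtx N, g (rhoN N w.1 + rhoN N w.2) := by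
  refine Fintype.sum_equiv (Equiv.subLeft v) _ _ fun u => ?_
  simp [torusDist]

lemma sum_rhoN {R : Type*} [AddCommMonoid R] (M : ℕ) (f : ℕ → R) :
    ∑ x : ZMod (2 * M + 1), f (rhoN (2 * M + 1) x) = f 0 + 2 • ∑ i ∈ range M, f (i + 1) := by
  -- `ZMod (2 * M + 1)` is definitionally `Fin (2 * M + 1)`.
  have hFin : ∑ x : ZMod (2 * M + 1), f (rhoN (2 * M + 1) x)
      = ∑ i ∈ range (2 * M + 1), f (if 2 * i ≤ 2 * M + 1 then i else 2 * M + 1 - i) :=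
    Fin.sum_univ_eq_sum_range (fun i => f (if 2 * i ≤ 2 * M + 1 then i else 2 * M + 1 - i)) _
  have hlow : ∀ i ∈ range M,
      f (if 2 * (i + 1) ≤ 2 * M + 1 then i + 1 else 2 * M + 1 - (i + 1)) = f (i + 1) :=
    fun i hi => by rw [if_pos (by grind)]
  have hhigh : ∑ i ∈ range M, f (if 2 * (M + i + 1) ≤ 2 * M + 1 then M + i + 1
      else 2 * M + 1 - (M + i + 1)) = ∑ i ∈ range M, f (i + 1) := by
    rw [← sum_range_reflect (fun i => f (i + 1))]
    exact sum_congr rfl fun i hi => by rw [if_neg (by grind)]; congr 1; grind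
  rw [hFin, sum_range_succ', show range (2 * M) = range (M + M) by rw [two_mul], sum_range_add,
    sum_congr rfl hlow, hhigh, two_nsmul, if_pos (by omega), add_comm]

lemma sum_torus_rhoN {R : Type*} [AddCommMonoid R] (M : ℕ) (f : ℕ → R) :
    ∑ w : Vtx (2 * M + 1), f (rhoN _ w.1 + rhoN _ w.2) =
      f 0 + 4 • (∑ i ∈ range M, f (i + 1) + ∑ i ∈ range M, ∑ j ∈ range M, f (i + j + 2)) := by
  have hinner : ∀ x : ZMod (2 * M + 1), ∑ y : ZMod (2 * M + 1), f (rhoN _ x + rhoN _ y) =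
      f (rhoN _ x) + 2 • ∑ j ∈ range M, f (rhoN _ x + (j + 1)) :=
    fun x => sum_rhoN M (fun r => f (rhoN _ x + r))
  rw [Fintype.sum_prod_type, sum_congr rfl fun x _ => hinner x, sum_add_distrib, ← smul_sum,
    sum_rhoN M f, sum_rhoN M (fun r => ∑ j ∈ range M, f (r + (j + 1)))]
  simp only [zero_add, smul_add, smul_smul, show ∀ i j, i + 1 + (j + 1) = i + j + 2 by grind]
  abel

theorem harmonic_add_sum_range_sum_range_inv (M : ℕ) :
    harmonic M + ∑ i ∈ range M, ∑ j ∈ range M, ((i + j + 2 : ℕ) : ℚ)⁻¹ =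
      (2 * M + 1) * (harmonic (2 * M) - harmonic M) := by
  induction M with
  | zero => simp
  | succ M ih =>
    have hrow : ∑ i ∈ range M, ((M + i + 2 : ℕ) : ℚ)⁻¹ =
        harmonic (2 * M + 1) - harmonic (M + 1) := by
      rw [show 2 * M + 1 = (M + 1) + M by ring, harmonic, harmonic, sum_range_add]
      ring_nf
    simp only [sum_range_succ, sum_add_distrib, fun x => add_comm x M, hrow]
    rw [eq_sub_of_add_eq' ih, show 2 * (M + 1) = 2 * M + 1 + 1 by ring, harmonic_succ (2 * M + 1),
      harmonic_succ (2 * M), harmonic_succ M]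
    push_cast
    field_simp
    ring

theorem sum_edgeProb (M : ℕ) {c : ℝ} (hcN : c ≤ 2 * M + 1) (v : Vtx (2 * M + 1)) :
    ∑ u, edgeProb (2 * M + 1) c v u = 4 * c * (harmonic (2 * M) - harmonic M : ℚ) := by
  have key := congrArg (Rat.cast : ℚ → ℝ) (harmonic_add_sum_range_sum_range_inv M)
  rw [sum_congr rfl fun u _ => edgeProb_eq_div (by push_cast; exact hcN) v u,
    sum_torusDist_eq v (fun k => c / ((2 * M + 1 : ℕ) * k : ℝ)),
    sum_torus_rhoN M (fun k => c / ((2 * M + 1 : ℕ) * k : ℝ))]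
  simp only [div_eq_mul_inv c, mul_inv, ← mul_sum, ← mul_add]
  push_cast [harmonic] at key ⊢
  rw [key, inv_zero, mul_zero, mul_zero, zero_add, nsmul_eq_mul, Nat.cast_ofNat]
  field_simp

theorem tendsto_harmonic_two_mul_sub_harmonic :
    Tendsto (fun M : ℕ => (harmonic (2 * M) - harmonic M : ℝ)) atTop (𝓝 (log 2)) := by
  have h2M : Tendsto (fun M : ℕ => 2 * M) atTop atTop :=
    tendsto_id.const_mul_atTop' two_pos
  have := ((tendsto_harmonic_sub_log.comp h2M).sub tendsto_harmonic_sub_log).const_add (log 2)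
  rw [sub_self, add_zero] at this
  refine this.congr' ?_
  filter_upwards [eventually_ne_atTop 0] with M hM
  simp only [Function.comp_apply, Nat.cast_mul, Nat.cast_ofNat]
  rw [log_mul two_ne_zero (by exact_mod_cast hM)]
  ring

/-- The corrections remove the `1/N` and `1/N²` terms of `H_{2M} - H_M - log 2`, `N = 2M + 1`;
there is no `1/N³` term. -/
noncomputable def correctedHarmonicGap (M : ℕ) : ℝ :=
  (harmonic (2 * M) - harmonic M : ℝ) + 1 / (2 * (2 * M + 1)) + 1 / (4 * (2 * M + 1) ^ 2)

lemma correctedHarmonicGap_succ_sub (m : ℕ) :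
    correctedHarmonicGap (m + 1) - correctedHarmonicGap m =
      -1 / ((2 * m + 1) ^ 2 * (2 * m + 2) * (2 * m + 3) ^ 2) := by
  rw [correctedHarmonicGap, correctedHarmonicGap, show 2 * (m + 1) = 2 * m + 1 + 1 by ring,
    harmonic_succ (2 * m + 1), harmonic_succ (2 * m), harmonic_succ m]
  push_cast
  field_simp
  ring

lemma dist_correctedHarmonicGap_succ_le {m : ℕ} (hm : 1 ≤ m) :
    dist (correctedHarmonicGap (m + 1)) (correctedHarmonicGap m) ≤
      1 / (4 * m ^ 4) - 1 / (4 * ((m + 1 : ℕ) : ℝ) ^ 4) := by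
  have hx : (1 : ℝ) ≤ m := by exact_mod_cast hm
  set x : ℝ := (m : ℝ)
  rw [Real.dist_eq, correctedHarmonicGap_succ_sub, abs_div, abs_neg, abs_one,
    abs_of_pos (by positivity)]
  push_cast
  have hden : 32 * x ^ 5 ≤ (2 * x + 1) ^ 2 * (2 * x + 2) * (2 * x + 3) ^ 2 :=
    calc 32 * x ^ 5 = (2 * x) ^ 2 * (2 * x) * (2 * x) ^ 2 := by ring
      _ ≤ _ := by gcongr <;> linarith
  have hgap : 1 / (4 * x ^ 4) - 1 / (4 * (x + 1) ^ 4) - 1 / (x * (x + 1) ^ 4) =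
      (6 * x ^ 2 + 4 * x + 1) / (4 * x ^ 4 * (x + 1) ^ 4) := by
    field_simp
    ring
  calc 1 / ((2 * x + 1) ^ 2 * (2 * x + 2) * (2 * x + 3) ^ 2) ≤ 1 / (32 * x ^ 5) :=
        one_div_le_one_div_of_le (by positivity) hden
    _ ≤ 1 / (x * (x + 1) ^ 4) := by
        refine one_div_le_one_div_of_le (by positivity) ?_
        calc x * (x + 1) ^ 4 ≤ x * (2 * x) ^ 4 := by gcongr; linarith
          _ ≤ 32 * x ^ 5 := by nlinarith [pow_pos (by linarith : (0 : ℝ) < x) 5]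
    _ ≤ 1 / (4 * x ^ 4) - 1 / (4 * (x + 1) ^ 4) := by
        have : 0 ≤ (6 * x ^ 2 + 4 * x + 1) / (4 * x ^ 4 * (x + 1) ^ 4) := by positivity
        linarith

theorem dist_correctedHarmonicGap_log_two_le {M : ℕ} (hM : 1 ≤ M) :
    dist (correctedHarmonicGap M) (log 2) ≤ 1 / (4 * M ^ 4) := by
  refine dist_le_of_tendsto_of_dist_succ_le (b := fun m : ℕ => 1 / (4 * (m : ℝ) ^ 4)) ?_ ?_
    fun m hm => dist_correctedHarmonicGap_succ_le (hM.trans hm)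
  · have hN : Tendsto (fun M : ℕ => (2 * M + 1 : ℝ)) atTop atTop :=
      tendsto_atTop_add_const_right _ 1 (tendsto_natCast_atTop_atTop.const_mul_atTop two_pos)
    have hinv := tendsto_inv_atTop_zero.comp hN
    convert (tendsto_harmonic_two_mul_sub_harmonic.add (hinv.mul_const (1 / 2))).add
      ((hinv.pow 2).mul_const (1 / 4)) using 2 with M
    · simp only [correctedHarmonicGap, Function.comp_apply]
      field_simp
    · simp
  · simpa using (tendsto_inv_atTop_zero.comp
      ((tendsto_pow_atTop (α := ℝ) four_ne_zero).comp tendsto_natCast_atTop_atTop)).mul_const 4⁻¹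

/-- For `c > 0` there are `C₀ > 0` and `N₀` such that for every odd `N ≥ N₀` and every
vertex `v`, `|Σ_{u} p(v,u) − (4c·log 2 − 2c/N − c/N²)| ≤ C₀/N⁴`. -/
theorem stmt2 (c : ℝ) (hc : 0 < c) :
    ∃ C₀ : ℝ, 0 < C₀ ∧ ∃ N₀ : ℕ, ∀ (N : ℕ) [NeZero N], N₀ ≤ N → Odd N →
      ∀ v : Vtx N,
        |(∑ u : Vtx N, edgeProb N c v u) -
            (4 * c * Real.log 2 - 2 * c / (N : ℝ) - c / (N : ℝ) ^ 2)| ≤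
          C₀ / (N : ℝ) ^ 4 := by
  refine ⟨81 * c, by positivity, ⌈c⌉₊ + 3, ?_⟩
  rintro N _ hN ⟨M, rfl⟩ v
  have hM : 1 ≤ M := by omega
  have hMr : (1 : ℝ) ≤ M := by exact_mod_cast hM
  have hcN : c ≤ 2 * M + 1 :=
    (Nat.le_ceil c).trans (by exact_mod_cast (by omega : ⌈c⌉₊ ≤ 2 * M + 1))
  have hrewrite : (∑ u, edgeProb (2 * M + 1) c v u) -
      (4 * c * log 2 - 2 * c / ((2 * M + 1 : ℕ) : ℝ) - c / ((2 * M + 1 : ℕ) : ℝ) ^ 2) =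
        4 * c * (correctedHarmonicGap M - log 2) := by
    rw [sum_edgeProb M hcN v, correctedHarmonicGap]
    push_cast
    field_simp
    ring
  rw [hrewrite, abs_mul, abs_of_pos (by positivity), ← Real.dist_eq]
  calc 4 * c * dist (correctedHarmonicGap M) (log 2) ≤ 4 * c * (1 / (4 * M ^ 4)) := by
        gcongr; exact dist_correctedHarmonicGap_log_two_le hM
    _ ≤ 81 * c / ((2 * M + 1 : ℕ) : ℝ) ^ 4 := by
        rw [mul_one_div, div_le_div_iff₀ (by positivity) (by positivity)]
        push_cast
        have : (2 * M + 1 : ℝ) ^ 4 ≤ (3 * M) ^ 4 := by gcongr; linarith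
        nlinarith
end

section
/- Fix c > 0. There exists N₀ such that for every integer N ≥ N₀, every vertex v ∈ V_N and every subset A ⊆ V_N ∖ {v}, one has c·|A|/N² ≤ Σ_{u ∈ A} p(v,u) ≤ 4c·√|A|/N. -/
/-!
Lifting through `ZMod.valMinAbs`, the torus sphere `{u | ρ(v,u) = r}` with `r ≥ 1` injects into
the ℓ¹-sphere of `ℤ²`, so it has at most `4r` points. For a set `A` of `k` points, splitting
`∑_{u ∈ A} 1/ρ(v,u)` at radius `R = ⌊√(k/4)⌋` bounds it by `4R + k/(R+1) ≤ 4√k`, and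
`p(v,u) ≤ c/(N ρ(v,u))` gives the upper bound. The lower bound is termwise: `ρ ≤ N`, and
`c ≤ N²` once `N ≥ c`.
-/

open scoped BigOperators

open Finset

section ShellSum

variable {α : Type*} (A : Finset α) (d : α → ℕ) {m : ℝ}

theorem sum_inv_le_of_card_shell_le (hd : ∀ u ∈ A, 0 < d u)
    (hshell : ∀ r, 0 < r → (#{u ∈ A | d u = r} : ℝ) ≤ m * r) (R : ℕ) :
    ∑ u ∈ A, (d u : ℝ)⁻¹ ≤ m * R + #A / (R + 1) := by
  have hnear : ∑ u ∈ A with d u ≤ R, (d u : ℝ)⁻¹ ≤ m * R := by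
    have hmaps : ∀ u ∈ {u ∈ A | d u ≤ R}, d u ∈ Icc 1 R := fun u hu => by
      rw [mem_filter] at hu
      exact mem_Icc.mpr ⟨hd u hu.1, hu.2⟩
    rw [← sum_fiberwise_of_maps_to hmaps]
    calc ∑ r ∈ Icc 1 R, ∑ u ∈ {u ∈ A | d u ≤ R} with d u = r, (d u : ℝ)⁻¹
        ≤ ∑ r ∈ Icc 1 R, m := sum_le_sum fun r hr => by
          have hr : 0 < r := (mem_Icc.mp hr).1
          rw [sum_congr rfl fun u hu => by rw [(mem_filter.mp hu).2], sum_const, nsmul_eq_mul,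
            ← div_eq_mul_inv, div_le_iff₀ (by exact_mod_cast hr)]
          refine le_trans ?_ (hshell r hr)
          gcongr
          exact filter_subset _ _
      _ = m * R := by simp [mul_comm]
  have hfar : ∑ u ∈ A with ¬d u ≤ R, (d u : ℝ)⁻¹ ≤ #A / (R + 1) := by
    calc ∑ u ∈ A with ¬d u ≤ R, (d u : ℝ)⁻¹ ≤ ∑ u ∈ A with ¬d u ≤ R, ((R : ℝ) + 1)⁻¹ :=
          sum_le_sum fun u hu => by
            have : R + 1 ≤ d u := by rw [mem_filter] at hu; omega
            gcongr
            exact_mod_cast this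
      _ ≤ #A / (R + 1) := by
          rw [sum_const, nsmul_eq_mul, ← div_eq_mul_inv]
          gcongr
          exact filter_subset _ _
  rw [← sum_filter_add_sum_filter_not A (d · ≤ R)]
  exact add_le_add hnear hfar

theorem sum_inv_le_two_sqrt_of_card_shell_le (hm : 0 < m) (hd : ∀ u ∈ A, 0 < d u)
    (hshell : ∀ r, 0 < r → (#{u ∈ A | d u = r} : ℝ) ≤ m * r) :
    ∑ u ∈ A, (d u : ℝ)⁻¹ ≤ 2 * √(m * #A) := by
  set s := √(#A / m)
  have hs : 0 ≤ s := Real.sqrt_nonneg _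
  have hcard : (#A : ℝ) = m * s ^ 2 := by
    rw [Real.sq_sqrt (by positivity)]; field_simp
  have hR : ((⌊s⌋₊ : ℕ) : ℝ) ≤ s := Nat.floor_le hs
  have hs_lt : s < (⌊s⌋₊ : ℕ) + 1 := Nat.lt_floor_add_one s
  have hfar : (#A : ℝ) / (⌊s⌋₊ + 1) ≤ m * s := by
    rw [div_le_iff₀ (by positivity), hcard]
    nlinarith [mul_nonneg (mul_nonneg hm.le hs) (sub_nonneg.2 hs_lt.le)]
  have hms : √(m * #A) = m * s := by
    rw [hcard, ← mul_assoc, ← sq, Real.sqrt_mul (sq_nonneg m), Real.sqrt_sq hm.le,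
      Real.sqrt_sq hs]
  calc ∑ u ∈ A, (d u : ℝ)⁻¹ ≤ m * ⌊s⌋₊ + #A / (⌊s⌋₊ + 1) :=
        sum_inv_le_of_card_shell_le A d hd hshell _
    _ ≤ m * s + m * s := by gcongr
    _ = 2 * √(m * #A) := by rw [hms]; ring

end ShellSum

/-- The ℓ¹-sphere of radius `r ≥ 1` in `ℤ²`, as four rotated copies of a quarter of it
(for `r = 0` this is `∅`, not `{0}`). -/
noncomputable def l1Sphere (r : ℕ) : Finset (ℤ × ℤ) :=
  (Ico 0 (r : ℤ)).biUnion fun j => {(r - j, j), (-j, r - j), (j - r, -j), (j, j - r)}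

theorem card_l1Sphere_le (r : ℕ) : #(l1Sphere r) ≤ 4 * r :=
  card_biUnion_le.trans <| (sum_le_card_nsmul _ _ 4 fun _ _ => card_le_four).trans_eq <| by
    rw [Int.card_Ico, sub_zero, Int.toNat_natCast, smul_eq_mul, mul_comm]

theorem mem_l1Sphere_of_natAbs_add_natAbs {x y : ℤ} {r : ℕ} (hr : 0 < r)
    (h : x.natAbs + y.natAbs = r) :
    (x, y) ∈ l1Sphere r := by
  simp only [l1Sphere, mem_biUnion, mem_Ico, mem_insert, mem_singleton, Prod.mk.injEq]
  rcases lt_or_ge 0 x with hx | hx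
  · rcases lt_or_ge y 0 with hy | hy
    · exact ⟨x, by omega, by omega⟩
    · exact ⟨y, by omega, by omega⟩
  · rcases lt_or_ge 0 y with hy | hy
    · exact ⟨-x, by omega, by omega⟩
    · rcases lt_or_ge x 0 with hx' | hx'
      · exact ⟨-y, by omega, by omega⟩
      · exact ⟨x, by omega, by omega⟩

theorem edgeProb_le_div_mul_inv {N : ℕ} (c : ℝ) (u v : Vtx N) :
    edgeProb N c u v ≤ c / N * (torusDist N u v : ℝ)⁻¹ := by
  unfold edgeProb
  split_ifs with h
  · simp [h, torusDist, rhoN]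
  · rw [← div_eq_mul_inv, div_div]
    exact min_le_left _ _

section Torus

variable {N : ℕ} [NeZero N]

theorem rhoN_eq_natAbs_valMinAbs (i : ZMod N) : rhoN N i = i.valMinAbs.natAbs := by
  rw [ZMod.valMinAbs_natAbs_eq_min, rhoN]
  split <;> omega

theorem torusDist_pos {u v : Vtx N} (h : u ≠ v) : 0 < torusDist N u v := by
  by_contra! h0
  refine h (Prod.ext ?_ ?_) <;>
  · rw [← sub_eq_zero, ← ZMod.valMinAbs_eq_zero, ← Int.natAbs_eq_zero,
      ← rhoN_eq_natAbs_valMinAbs]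
    unfold torusDist at h0
    omega

theorem torusDist_le (u v : Vtx N) : torusDist N u v ≤ N := by
  have h₁ := ZMod.natAbs_valMinAbs_le (u.1 - v.1)
  have h₂ := ZMod.natAbs_valMinAbs_le (u.2 - v.2)
  rw [torusDist, rhoN_eq_natAbs_valMinAbs, rhoN_eq_natAbs_valMinAbs]
  omega

theorem card_torusDist_eq_le (v : Vtx N) {r : ℕ} (hr : 0 < r) :
    #{u | torusDist N v u = r} ≤ 4 * r := by
  have hsub : ({u | torusDist N v u = r} : Finset (Vtx N)) ⊆
      (l1Sphere r).image fun p : ℤ × ℤ => (v.1 - p.1, v.2 - p.2) := fun u hu => by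
    rw [mem_filter, torusDist, rhoN_eq_natAbs_valMinAbs, rhoN_eq_natAbs_valMinAbs] at hu
    exact mem_image.mpr ⟨_, mem_l1Sphere_of_natAbs_add_natAbs hr hu.2, by simp⟩
  exact (card_le_card hsub).trans (card_image_le.trans (card_l1Sphere_le r))

theorem sum_inv_torusDist_le (v : Vtx N) {A : Finset (Vtx N)} (hvA : v ∉ A) :
    ∑ u ∈ A, (torusDist N v u : ℝ)⁻¹ ≤ 4 * √(#A : ℝ) := by
  have hshell (r : ℕ) (hr : 0 < r) : (#{u ∈ A | torusDist N v u = r} : ℝ) ≤ 4 * r := by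
    exact_mod_cast (card_le_card (filter_subset_filter _ (subset_univ A))).trans
      (card_torusDist_eq_le v hr)
  calc ∑ u ∈ A, (torusDist N v u : ℝ)⁻¹ ≤ 2 * √(4 * #A) :=
        sum_inv_le_two_sqrt_of_card_shell_le A _ four_pos
          (fun u hu => torusDist_pos (ne_of_mem_of_not_mem hu hvA).symm) hshell
    _ = 4 * √(#A : ℝ) := by
        have hsqrt4 : √(4 : ℝ) = 2 := by rw [Real.sqrt_eq_iff_eq_sq] <;> norm_num
        rw [Real.sqrt_mul zero_le_four, hsqrt4]
        ring

theorem div_sq_le_edgeProb {c : ℝ} (hc : 0 ≤ c) (hcN : c ≤ (N : ℝ) ^ 2) {u v : Vtx N}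
    (h : u ≠ v) :
    c / (N : ℝ) ^ 2 ≤ edgeProb N c u v := by
  have hd : (0 : ℝ) < torusDist N u v := by exact_mod_cast torusDist_pos h
  have hdN : (torusDist N u v : ℝ) ≤ N := by exact_mod_cast torusDist_le u v
  rw [edgeProb, if_neg h]
  refine le_min ?_ (div_le_one_of_le₀ hcN (by positivity))
  rw [sq]
  exact div_le_div_of_nonneg_left hc (mul_pos (by exact_mod_cast NeZero.pos N) hd) (by gcongr)

end Torus

/-- For `c > 0` there is `N₀` such that for every `N ≥ N₀`, every vertex `v` and every
subset `A ⊆ V_N ∖ {v}`, `c·|A|/N² ≤ Σ_{u ∈ A} p(v,u) ≤ 4c·√|A|/N`. -/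
theorem stmt6 (c : ℝ) (hc : 0 < c) :
    ∃ N₀ : ℕ, ∀ (N : ℕ) [NeZero N], N₀ ≤ N →
      ∀ v : Vtx N, ∀ A : Finset (Vtx N), v ∉ A →
        c * (A.card : ℝ) / (N : ℝ) ^ 2 ≤ ∑ u ∈ A, edgeProb N c v u ∧
        ∑ u ∈ A, edgeProb N c v u ≤ 4 * c * Real.sqrt (A.card : ℝ) / (N : ℝ) := by
  refine ⟨⌈c⌉₊, fun N _ hN v A hvA => ⟨?_, ?_⟩⟩
  · have hN1 : (1 : ℝ) ≤ N := by exact_mod_cast Nat.one_le_iff_ne_zero.mpr (NeZero.ne N)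
    have hcN : c ≤ (N : ℝ) ^ 2 := by nlinarith [Nat.ceil_le.mp hN]
    calc c * #A / (N : ℝ) ^ 2 = ∑ u ∈ A, c / (N : ℝ) ^ 2 := by
          rw [sum_const, nsmul_eq_mul]; ring
      _ ≤ ∑ u ∈ A, edgeProb N c v u := sum_le_sum fun u hu =>
          div_sq_le_edgeProb hc.le hcN (ne_of_mem_of_not_mem hu hvA).symm
  · calc ∑ u ∈ A, edgeProb N c v u ≤ ∑ u ∈ A, c / N * (torusDist N v u : ℝ)⁻¹ :=
          sum_le_sum fun u _ => edgeProb_le_div_mul_inv c v u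
      _ = c / N * ∑ u ∈ A, (torusDist N v u : ℝ)⁻¹ := (mul_sum _ _ _).symm
      _ ≤ c / N * (4 * √(#A : ℝ)) := by gcongr; exact sum_inv_torusDist_le v hvA
      _ = 4 * c * √(#A : ℝ) / N := by ring
end

section
/- Fix c > 0. There exists N₀ such that for every integer N ≥ N₀ and all distinct vertices u, v ∈ V_N, Σ_{x ∈ V_N, x ≠ u, x ≠ v} p(u,x)·p(x,v) ≤ 5c²·(log N)/N². -/
/-!
By AM–GM, `p(u,x) p(x,v) ≤ (p(u,x)² + p(v,x)²) / 2`, and `p(u,x)² ≤ c² / (N² ρ(u,x)²)`, so by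
translation invariance it suffices to show `Σ_w 1/ρ(w,0)² ≤ 12 + 4 log N`; this is at most
`5 log N` once `log N ≥ 12`. Each coordinate distance `ρ_N` takes the value `0` once and every
value in `1, …, ⌊N/2⌋` at most twice. Summing over the second coordinate first, the telescoping
bound `Σ_{j ≥ 1} 1/(i+j)² ≤ 1/i` reduces the double sum to the harmonic sum
`Σ_{i ≤ N/2} 1/i ≤ 1 + log N`.
-/

open scoped BigOperators

open Finset Real

lemma inv_add_one_sq_le_inv_sub_inv {x : ℝ} (hx : 0 < x) :
    ((x + 1) ^ 2)⁻¹ ≤ x⁻¹ - (x + 1)⁻¹ := by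
  rw [inv_sub_inv hx.ne' (by positivity), add_sub_cancel_left, one_div, sq]
  gcongr
  linarith

lemma sum_Icc_inv_add_sq_le {x : ℝ} (hx : 0 < x) (M : ℕ) :
    ∑ j ∈ Icc 1 M, ((x + j) ^ 2)⁻¹ ≤ x⁻¹ := by
  suffices telescope : ∑ j ∈ Icc 1 M, ((x + j) ^ 2)⁻¹ ≤ x⁻¹ - (x + M)⁻¹ by
    have : 0 ≤ (x + M)⁻¹ := by positivity
    linarith
  induction M with
  | zero => simp
  | succ M ih =>
    rw [sum_Icc_succ_top (by omega), Nat.cast_succ, ← add_assoc]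
    have := inv_add_one_sq_le_inv_sub_inv (x := x + M) (by positivity)
    linarith

lemma sum_Icc_inv_sq_le_two (M : ℕ) : ∑ j ∈ Icc 1 M, ((j : ℝ) ^ 2)⁻¹ ≤ 2 := by
  have hIoo : Ioo 0 (M + 1) = Icc 1 M := by ext; simp only [mem_Ioo, mem_Icc]; omega
  simpa [hIoo] using sum_Ioo_inv_sq_le (α := ℝ) 0 (M + 1)

lemma sum_Icc_inv_le_one_add_log {M N : ℕ} (hMN : M ≤ N) :
    ∑ j ∈ Icc 1 M, (j : ℝ)⁻¹ ≤ 1 + log N :=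
  calc ∑ j ∈ Icc 1 M, (j : ℝ)⁻¹ ≤ ∑ j ∈ Icc 1 N, (j : ℝ)⁻¹ :=
        sum_le_sum_of_subset_of_nonneg (Icc_subset_Icc_right hMN) fun _ _ _ => by positivity
    _ = harmonic N := by simp [harmonic_eq_sum_Icc]
    _ ≤ 1 + log N := harmonic_le_one_add_log N

lemma sum_rhoN_le {N : ℕ} [NeZero N] (h : ℕ → ℝ) (hh : ∀ i, 0 ≤ h i) :
    ∑ a : ZMod N, h (rhoN N a) ≤ h 0 + 2 * ∑ i ∈ Icc 1 (N / 2), h i := by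
  set M := N / 2
  have hM : M < N := Nat.div_lt_self (Nat.pos_of_neZero N) one_lt_two
  have hval : ∑ a : ZMod N, h (rhoN N a)
      = ∑ v ∈ Ico 0 N, h (if 2 * v ≤ N then v else N - v) :=
    sum_nbij' ZMod.val (↑) (by simp [ZMod.val_lt]) (by simp)
      (by simp) (fun v hv => ZMod.val_cast_of_lt (mem_Ico.mp hv).2) (fun _ _ => rfl)
  have hlow : ∑ v ∈ Ico 0 (M + 1), h (if 2 * v ≤ N then v else N - v)
      = h 0 + ∑ i ∈ Icc 1 M, h i := by
    rw [sum_eq_sum_Ico_succ_bot (by omega : 0 < M + 1), Ico_add_one_right_eq_Icc]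
    refine congrArg₂ _ (by simp) (sum_congr rfl fun v hv => ?_)
    rw [if_pos (by simp only [mem_Icc] at hv; omega)]
  have hhigh : ∑ v ∈ Ico (M + 1) N, h (if 2 * v ≤ N then v else N - v)
      ≤ ∑ i ∈ Icc 1 M, h i :=
    calc ∑ v ∈ Ico (M + 1) N, h (if 2 * v ≤ N then v else N - v)
        = ∑ v ∈ Ico (M + 1) N, h (N - v) :=
          sum_congr rfl fun v hv => by rw [if_neg (by simp only [mem_Ico] at hv; omega)]
      _ = ∑ i ∈ Ico 1 (N - M), h i := by
          rw [sum_Ico_reflect h _ (Nat.le_succ N)]; congr 2 <;> omega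
      _ ≤ ∑ i ∈ Icc 1 M, h i :=
          sum_le_sum_of_subset_of_nonneg
            (fun i hi => by simp only [mem_Ico, mem_Icc] at hi ⊢; omega) fun i _ _ => hh i
  rw [hval, ← sum_Ico_consecutive _ (Nat.zero_le (M + 1)) hM, hlow]
  linarith

lemma rhoN_neg {N : ℕ} [NeZero N] (a : ZMod N) : rhoN N (-a) = rhoN N a := by
  rcases eq_or_ne a 0 with rfl | ha
  · rw [neg_zero]
  have hpos : a.val ≠ 0 := (ZMod.val_ne_zero a).mpr ha
  have hlt := ZMod.val_lt a
  unfold rhoN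
  rw [ZMod.neg_val, if_neg ha]
  split_ifs <;> omega

lemma torusDist_comm {N : ℕ} [NeZero N] (u v : Vtx N) : torusDist N u v = torusDist N v u := by
  unfold torusDist
  rw [← neg_sub v.1, rhoN_neg, ← neg_sub v.2, rhoN_neg]

lemma edgeProb_comm {N : ℕ} [NeZero N] (c : ℝ) (u v : Vtx N) :
    edgeProb N c u v = edgeProb N c v u := by
  unfold edgeProb
  simp only [torusDist_comm u v, eq_comm]

lemma sum_torusDist_eq_s13 {N : ℕ} [NeZero N] (f : ℕ → ℝ) (u : Vtx N) :
    ∑ x, f (torusDist N u x) = ∑ w, f (torusDist N w 0) := by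
  have hsub : ∀ x, torusDist N u x = torusDist N (u - x) 0 := fun x => by simp [torusDist]
  simp_rw [hsub]
  exact Equiv.sum_comp (Equiv.subLeft u) fun w => f (torusDist N w 0)

-- The `w = 0` term is `0⁻¹ = 0`.
lemma sum_inv_sq_torusDist_zero_le (N : ℕ) [NeZero N] :
    ∑ w : Vtx N, ((torusDist N w 0 : ℝ) ^ 2)⁻¹ ≤ 12 + 4 * log N := by
  set M := N / 2
  set F : ℕ → ℝ := fun k => ((k : ℝ) ^ 2)⁻¹
  set G : ℕ → ℝ := fun i => ∑ b : ZMod N, F (i + rhoN N b)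
  have hF : ∀ k, 0 ≤ F k := fun k => by positivity
  have hG_le : ∀ i, G i ≤ F i + 2 * ∑ j ∈ Icc 1 M, F (i + j) := fun i => by
    simpa using sum_rhoN_le (fun j => F (i + j)) fun j => hF _
  have hG_zero : G 0 ≤ 4 := by
    have := hG_le 0
    simp only [F, zero_add, Nat.cast_zero, zero_pow two_ne_zero, inv_zero] at this
    linarith [sum_Icc_inv_sq_le_two M]
  have hG_pos : ∀ i ∈ Icc 1 M, G i ≤ F i + 2 * (i : ℝ)⁻¹ := fun i hi => by
    have hi : (0 : ℝ) < i := by simp only [mem_Icc] at hi; exact_mod_cast hi.1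
    have := hG_le i
    simp only [F, Nat.cast_add] at this
    linarith [sum_Icc_inv_add_sq_le hi M]
  have hsum_G : ∑ i ∈ Icc 1 M, G i ≤ 2 + 2 * (1 + log N) :=
    calc ∑ i ∈ Icc 1 M, G i ≤ ∑ i ∈ Icc 1 M, (F i + 2 * (i : ℝ)⁻¹) := sum_le_sum hG_pos
      _ = ∑ i ∈ Icc 1 M, F i + 2 * ∑ i ∈ Icc 1 M, (i : ℝ)⁻¹ := by
          rw [sum_add_distrib, mul_sum]
      _ ≤ 2 + 2 * (1 + log N) := by
          linarith [sum_Icc_inv_sq_le_two M, sum_Icc_inv_le_one_add_log (Nat.div_le_self N 2)]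
  calc ∑ w : Vtx N, ((torusDist N w 0 : ℝ) ^ 2)⁻¹ = ∑ a : ZMod N, G (rhoN N a) := by
        simp [torusDist, Fintype.sum_prod_type, F, G]
    _ ≤ G 0 + 2 * ∑ i ∈ Icc 1 M, G i := sum_rhoN_le G fun i => sum_nonneg fun b _ => hF _
    _ ≤ 12 + 4 * log N := by linarith

lemma sq_min_one_le_sq (a : ℝ) : min a 1 ^ 2 ≤ a ^ 2 := by
  rcases le_total a 1 with h | h
  · rw [min_eq_left h]
  · rw [min_eq_right h, one_pow]
    exact one_le_pow₀ h

lemma edgeProb_sq_le (N : ℕ) (c : ℝ) (u v : Vtx N) :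
    edgeProb N c u v ^ 2 ≤ c ^ 2 / (N : ℝ) ^ 2 * ((torusDist N u v : ℝ) ^ 2)⁻¹ := by
  unfold edgeProb
  split_ifs
  · rw [sq, zero_mul]
    positivity
  · refine (sq_min_one_le_sq _).trans_eq ?_
    ring

lemma sum_edgeProb_sq_le (N : ℕ) [NeZero N] (c : ℝ) (u : Vtx N) :
    ∑ x, edgeProb N c u x ^ 2 ≤ c ^ 2 / (N : ℝ) ^ 2 * (12 + 4 * log N) :=
  calc ∑ x, edgeProb N c u x ^ 2
      ≤ ∑ x, c ^ 2 / (N : ℝ) ^ 2 * ((torusDist N u x : ℝ) ^ 2)⁻¹ :=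
        sum_le_sum fun x _ => edgeProb_sq_le N c u x
    _ = c ^ 2 / (N : ℝ) ^ 2 * ∑ w : Vtx N, ((torusDist N w 0 : ℝ) ^ 2)⁻¹ := by
        rw [← mul_sum, sum_torusDist_eq_s13 (fun d => ((d : ℝ) ^ 2)⁻¹)]
    _ ≤ c ^ 2 / (N : ℝ) ^ 2 * (12 + 4 * log N) := by
        gcongr
        exact sum_inv_sq_torusDist_zero_le N

theorem stmt13_general (c : ℝ) :
    ∃ N₀ : ℕ, ∀ (N : ℕ) [NeZero N], N₀ ≤ N →
      ∀ u v : Vtx N, u ≠ v →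
        ∑ x ∈ Finset.univ.filter (fun x : Vtx N => x ≠ u ∧ x ≠ v),
            edgeProb N c u x * edgeProb N c x v ≤
          5 * c ^ 2 * Real.log N / (N : ℝ) ^ 2 := by
  refine ⟨⌈exp 12⌉₊, fun N _ hN u v _ => ?_⟩
  have hlog : 12 ≤ log N :=
    (le_log_iff_exp_le (Nat.cast_pos.mpr (Nat.pos_of_neZero N))).mpr (Nat.ceil_le.mp hN)
  calc ∑ x ∈ univ.filter (fun x : Vtx N => x ≠ u ∧ x ≠ v), edgeProb N c u x * edgeProb N c x v
      ≤ ∑ x ∈ univ.filter (fun x : Vtx N => x ≠ u ∧ x ≠ v),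
          (edgeProb N c u x ^ 2 + edgeProb N c v x ^ 2) / 2 :=
        sum_le_sum fun x _ => by
          rw [edgeProb_comm c x v]
          linarith [two_mul_le_add_sq (edgeProb N c u x) (edgeProb N c v x)]
    _ ≤ ∑ x, (edgeProb N c u x ^ 2 + edgeProb N c v x ^ 2) / 2 :=
        sum_le_sum_of_subset_of_nonneg (filter_subset _ _) fun _ _ _ => by positivity
    _ = (∑ x, edgeProb N c u x ^ 2 + ∑ x, edgeProb N c v x ^ 2) / 2 := by
        rw [← sum_add_distrib, sum_div]
    _ ≤ c ^ 2 / (N : ℝ) ^ 2 * (12 + 4 * log N) := by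
        linarith [sum_edgeProb_sq_le N c u, sum_edgeProb_sq_le N c v]
    _ ≤ c ^ 2 / (N : ℝ) ^ 2 * (5 * log N) := by
        gcongr
        linarith
    _ = 5 * c ^ 2 * log N / (N : ℝ) ^ 2 := by ring

/-- For `c > 0` there is `N₀` such that for all `N ≥ N₀` and all distinct `u, v`,
`Σ_{x ≠ u, x ≠ v} p(u,x)·p(x,v) ≤ 5c²·(log N)/N²`. -/
theorem stmt13 (c : ℝ) (hc : 0 < c) :
    ∃ N₀ : ℕ, ∀ (N : ℕ) [NeZero N], N₀ ≤ N →
      ∀ u v : Vtx N, u ≠ v →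
        ∑ x ∈ Finset.univ.filter (fun x : Vtx N => x ≠ u ∧ x ≠ v),
            edgeProb N c u x * edgeProb N c x v ≤
          5 * c ^ 2 * Real.log N / (N : ℝ) ^ 2 :=
  stmt13_general c
end
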